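/- arXiv:2308.12338 — 3 statements merged into one kernel-verified Lean document; each statement's English description precedes it below -/
import Mathlib

section
/- Let f be a real-valued function on density matrices (of all finite dimensions) that is weakly tensor-product additive, meaning f(ρ^{⊗n}) = n·f(ρ) for every state ρ and positive integer n, and suppose f is not constant. Then f cannot be 'more than asymptotically continuous': there is no continuity bound of the form |f(ρ₁)−f(ρ₂)| ≤ g(d, ‖ρ₁−ρ₂‖₁) valid for all d-dimensional states, where g is bounded and continuous in the second argument with g(d,t) → 0 as t → 0, and g satisfies g(d_k, t_k)/log d_k → 0 for every sequence of dimensions d_k → ∞ and every sequence t_k ∈ [0,1]. -/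
open Matrix ComplexOrder

/-- Trace norm `‖A‖₁ = Tr √(AᴴA)`. -/
noncomputable def traceNorm {n : Type*} [Fintype n] [DecidableEq n]
    (A : Matrix n n ℂ) : ℝ :=
  ((Matrix.posSemidef_conjTranspose_mul_self A).1.eigenvectorUnitary.1 *
    diagonal (((↑) : ℝ → ℂ) ∘ Real.sqrt ∘ (Matrix.posSemidef_conjTranspose_mul_self A).1.eigenvalues) *
    (star (Matrix.posSemidef_conjTranspose_mul_self A).1.eigenvectorUnitary : Matrix n n ℂ)).trace.re

/-- `ρ` is a density matrix. -/
def IsDensityMatrix {n : Type*} [Fintype n] (ρ : Matrix n n ℂ) : Prop :=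
  ρ.PosSemidef ∧ ρ.trace = 1

/-- The `n`-fold tensor (Kronecker) power of a matrix, indexed by `Fin n → Fin d`. -/
def tpow {d : ℕ} (A : Matrix (Fin d) (Fin d) ℂ) (n : ℕ) :
    Matrix (Fin n → Fin d) (Fin n → Fin d) ℂ :=
  Matrix.of fun f g => ∏ i, A (f i) (g i)

/-- The `n`-fold tensor power, reindexed as a `d^n × d^n` matrix. -/
def tpow' {d : ℕ} (A : Matrix (Fin d) (Fin d) ℂ) (n : ℕ) :
    Matrix (Fin (d ^ n)) (Fin (d ^ n)) ℂ :=
  Matrix.reindex finFunctionFinEquiv finFunctionFinEquiv (tpow A n)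

open scoped MatrixOrder

lemma trace_reindex' {m k : Type*} [Fintype m] [Fintype k] [DecidableEq m] [DecidableEq k]
    (e : m ≃ k) (M : Matrix m m ℂ) : (Matrix.reindex e e M).trace = M.trace := by
  simp only [Matrix.trace, Matrix.diag, Matrix.reindex_apply, Matrix.submatrix_apply]
  exact Fintype.sum_equiv e.symm _ _ fun i => rfl

lemma tpow_conjTranspose {d : ℕ} (A : Matrix (Fin d) (Fin d) ℂ) (n : ℕ) :
    (tpow A n)ᴴ = tpow Aᴴ n := by
  ext f g
  simp [tpow, Matrix.conjTranspose_apply, star_prod]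

lemma tpow_mul {d : ℕ} (A B : Matrix (Fin d) (Fin d) ℂ) (n : ℕ) :
    tpow A n * tpow B n = tpow (A * B) n := by
  ext f g
  simp only [Matrix.mul_apply, tpow, Matrix.of_apply, ← Finset.prod_mul_distrib]
  rw [Fintype.prod_sum fun i j => A (f i) j * B j (g i)]

lemma tpow_trace {d : ℕ} (A : Matrix (Fin d) (Fin d) ℂ) (n : ℕ) :
    (tpow A n).trace = A.trace ^ n := by
  simp only [Matrix.trace, Matrix.diag, tpow, Matrix.of_apply]
  rw [Fintype.sum_pow]

lemma tpow_posSemidef {d : ℕ} {A : Matrix (Fin d) (Fin d) ℂ} (hA : A.PosSemidef) (n : ℕ) :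
    (tpow A n).PosSemidef := by
  have h1 : (CFC.sqrt A)ᴴ = CFC.sqrt A := (Matrix.nonneg_iff_posSemidef.mp (CFC.sqrt_nonneg A)).1
  have h2 : CFC.sqrt A * CFC.sqrt A = A := CFC.sqrt_mul_sqrt_self A hA.nonneg
  have : tpow A n = (tpow (CFC.sqrt A) n)ᴴ * tpow (CFC.sqrt A) n := by
    rw [tpow_conjTranspose, h1, tpow_mul, h2]
  rw [this]
  exact Matrix.posSemidef_conjTranspose_mul_self _

lemma tpow'_density {d : ℕ} {ρ : Matrix (Fin d) (Fin d) ℂ} (hρ : IsDensityMatrix ρ) (n : ℕ) :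
    IsDensityMatrix (tpow' ρ n) := by
  constructor
  · rw [tpow', Matrix.reindex_apply]
    exact (tpow_posSemidef hρ.1 n).submatrix _
  · rw [tpow', trace_reindex', tpow_trace, hρ.2, one_pow]

lemma smul_real_psd {m : Type*} [Fintype m] {M : Matrix m m ℂ} (hM : M.PosSemidef)
    (r : ℝ) (hr : 0 ≤ r) : ((r : ℂ) • M).PosSemidef := by
  exact hM.smul (Complex.zero_le_real.mpr hr)

lemma traceNorm_sub_mem {m : Type*} [Fintype m] [DecidableEq m]
    {P Q : Matrix m m ℂ} (hP : P.PosSemidef) (hQ : Q.PosSemidef) :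
    traceNorm (P - Q) ∈ Set.Icc 0 (P.trace.re + Q.trace.re) := by
  set A := P - Q with hAdef
  have hA : A.IsHermitian := hP.1.sub hQ.1
  set U : Matrix m m ℂ := (Matrix.IsHermitian.eigenvectorUnitary hA : Matrix m m ℂ) with hUdef
  set ev : m → ℝ := hA.eigenvalues with hevdef
  set B : Matrix m m ℂ := U * Matrix.diagonal (fun i => ((|ev i| : ℝ) : ℂ)) * Uᴴ with hBdef
  have hU1 : Uᴴ * U = 1 := by
    rw [← Matrix.star_eq_conjTranspose]
    exact Matrix.mem_unitaryGroup_iff'.mp (Matrix.IsHermitian.eigenvectorUnitary hA).2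
  have hU2 : U * Uᴴ = 1 := by
    rw [← Matrix.star_eq_conjTranspose]
    exact Matrix.mem_unitaryGroup_iff.mp (Matrix.IsHermitian.eigenvectorUnitary hA).2
  have hBpsd : B.PosSemidef := by
    apply Matrix.PosSemidef.mul_mul_conjTranspose_same
    refine Matrix.posSemidef_diagonal_iff.mpr fun i => ?_
    exact Complex.zero_le_real.mpr (abs_nonneg _)
  have hspec : A = U * Matrix.diagonal (fun i => ((ev i : ℝ) : ℂ)) * Uᴴ := by
    have h := hA.spectral_theorem
    rw [Unitary.conjStarAlgAut_apply, Matrix.star_eq_conjTranspose] at h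
    exact h
  have hB2 : B ^ 2 = Aᴴ * A := by
    rw [hA.eq]
    rw [pow_two, hBdef]
    calc U * Matrix.diagonal (fun i => ((|ev i| : ℝ) : ℂ)) * Uᴴ *
          (U * Matrix.diagonal (fun i => ((|ev i| : ℝ) : ℂ)) * Uᴴ)
        = U * (Matrix.diagonal (fun i => ((|ev i| : ℝ) : ℂ)) * (Uᴴ * U) *
            Matrix.diagonal (fun i => ((|ev i| : ℝ) : ℂ))) * Uᴴ := by
          simp only [Matrix.mul_assoc]
      _ = U * (Matrix.diagonal (fun i => ((ev i : ℝ) : ℂ)) * (Uᴴ * U) *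
            Matrix.diagonal (fun i => ((ev i : ℝ) : ℂ))) * Uᴴ := by
          rw [hU1]
          simp only [Matrix.mul_one, Matrix.diagonal_mul_diagonal]
          have : (fun i => ((|ev i| : ℝ) : ℂ) * ((|ev i| : ℝ) : ℂ))
              = fun i => ((ev i : ℝ) : ℂ) * ((ev i : ℝ) : ℂ) := by
            funext i
            rw [← Complex.ofReal_mul, ← Complex.ofReal_mul, abs_mul_abs_self]
          rw [this]
      _ = A * A := by
          rw [hspec]
          simp only [Matrix.mul_assoc]
  have hsqrt : B = CFC.sqrt (Aᴴ * A) :=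
    (CFC.sqrt_unique ((sq B).symm.trans hB2) hBpsd.nonneg).symm
  have hcfc : ((Matrix.posSemidef_conjTranspose_mul_self A).1.eigenvectorUnitary.1 *
      diagonal (((↑) : ℝ → ℂ) ∘ Real.sqrt ∘ (Matrix.posSemidef_conjTranspose_mul_self A).1.eigenvalues) *
      (star (Matrix.posSemidef_conjTranspose_mul_self A).1.eigenvectorUnitary : Matrix m m ℂ))
      = CFC.sqrt (Aᴴ * A) := by
    rw [CFC.sqrt_eq_real_sqrt (Aᴴ * A) (Matrix.posSemidef_conjTranspose_mul_self A).nonneg,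
      cfcₙ_eq_cfc (Real.continuous_sqrt.continuousOn) Real.sqrt_zero,
      (Matrix.posSemidef_conjTranspose_mul_self A).1.cfc_eq, IsHermitian.cfc,
      Unitary.conjStarAlgAut_apply]
    rfl
  have htn : traceNorm A = ∑ i, |ev i| := by
    rw [traceNorm, hcfc, ← hsqrt, hBdef, Matrix.trace_mul_cycle, hU1, Matrix.one_mul,
      Matrix.trace_diagonal]
    simp
  rw [htn]
  constructor
  · exact Finset.sum_nonneg fun i _ => abs_nonneg _
  · have key : ∀ R : Matrix m m ℂ,
        ∑ i, dotProduct (star ⇑(hA.eigenvectorBasis i)) (R *ᵥ ⇑(hA.eigenvectorBasis i))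
          = R.trace := by
      intro R
      have hcol : ∀ i j, (⇑(hA.eigenvectorBasis i) : m → ℂ) j = U j i := by
        intro i j
        rw [hUdef]
        exact (Matrix.IsHermitian.eigenvectorUnitary_apply hA j i).symm
      have entry : ∀ i, dotProduct (star ⇑(hA.eigenvectorBasis i))
          (R *ᵥ ⇑(hA.eigenvectorBasis i)) = (Uᴴ * R * U) i i := by
        intro i
        simp only [dotProduct, Matrix.mulVec, Matrix.mul_apply,
          Matrix.conjTranspose_apply, Pi.star_apply, hcol, dotProduct,
          Finset.sum_mul, Finset.mul_sum]
        rw [Finset.sum_comm]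
        apply Finset.sum_congr rfl
        intro j _
        apply Finset.sum_congr rfl
        intro k _
        ring
      simp only [entry]
      have : ∑ i, (Uᴴ * R * U) i i = (Uᴴ * R * U).trace := rfl
      rw [this, Matrix.trace_mul_cycle, hU2, Matrix.one_mul]
    have hev_le : ∀ i, |ev i| ≤
        (dotProduct (star ⇑(hA.eigenvectorBasis i)) (P *ᵥ ⇑(hA.eigenvectorBasis i))).re
        + (dotProduct (star ⇑(hA.eigenvectorBasis i)) (Q *ᵥ ⇑(hA.eigenvectorBasis i))).re := by
      intro i
      set v := ⇑(hA.eigenvectorBasis i)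
      have hp := (Complex.nonneg_iff.mp (hP.dotProduct_mulVec_nonneg v)).1
      have hq := (Complex.nonneg_iff.mp (hQ.dotProduct_mulVec_nonneg v)).1
      have heig : ev i = (dotProduct (star v) (A *ᵥ v)).re := by
        have := hA.eigenvalues_eq i
        simpa using this
      have hsplit : dotProduct (star v) (A *ᵥ v)
          = dotProduct (star v) (P *ᵥ v) - dotProduct (star v) (Q *ᵥ v) := by
        rw [hAdef, Matrix.sub_mulVec, dotProduct_sub]
      rw [heig, hsplit, Complex.sub_re]
      rw [abs_le]
      constructor <;> nlinarith [hp, hq]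
    calc ∑ i, |ev i| ≤ ∑ i,
        ((dotProduct (star ⇑(hA.eigenvectorBasis i)) (P *ᵥ ⇑(hA.eigenvectorBasis i))).re
        + (dotProduct (star ⇑(hA.eigenvectorBasis i)) (Q *ᵥ ⇑(hA.eigenvectorBasis i))).re) :=
          Finset.sum_le_sum fun i _ => hev_le i
      _ = P.trace.re + Q.trace.re := by
          rw [Finset.sum_add_distrib, ← Complex.re_sum, ← Complex.re_sum, key P, key Q]

/-- A non-constant weakly tensor-product additive function on density matrices cannot be
"more than asymptotically continuous". -/
theorem not_more_than_asymptotically_continuous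
    (f : ∀ {d : ℕ}, Matrix (Fin d) (Fin d) ℂ → ℝ)
    (hadd : ∀ (d n : ℕ) (ρ : Matrix (Fin d) (Fin d) ℂ), IsDensityMatrix ρ → 0 < n →
      f (tpow' ρ n) = (n : ℝ) * f ρ)
    (hnonconst : ∃ (d : ℕ) (ρ σ : Matrix (Fin d) (Fin d) ℂ),
      IsDensityMatrix ρ ∧ IsDensityMatrix σ ∧ f ρ < f σ) :
    ¬ ∃ g : ℕ → ℝ → ℝ,
      (∀ d, ContinuousOn (g d) (Set.Icc 0 1)) ∧
      (∀ d, ∃ M : ℝ, ∀ t ∈ Set.Icc (0:ℝ) 1, |g d t| ≤ M) ∧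
      (∀ d, Filter.Tendsto (g d) (nhdsWithin 0 (Set.Icc 0 1)) (nhds 0)) ∧
      (∀ (d : ℕ) (ρ₁ ρ₂ : Matrix (Fin d) (Fin d) ℂ),
        IsDensityMatrix ρ₁ → IsDensityMatrix ρ₂ →
        |f ρ₁ - f ρ₂| ≤ g d (traceNorm (ρ₁ - ρ₂))) ∧
      (∀ (dk : ℕ → ℕ) (tk : ℕ → ℝ), Filter.Tendsto dk Filter.atTop Filter.atTop →
        (∀ k, tk k ∈ Set.Icc (0:ℝ) 1) →
        Filter.Tendsto (fun k => g (dk k) (tk k) / Real.log (dk k))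
          Filter.atTop (nhds 0)) := by
  obtain ⟨d, ρ, σ, hρ, hσ, hlt⟩ := hnonconst
  rintro ⟨g, -, -, -, hineq, hlog⟩
  -- the dimension is at least 2
  have hd2 : 2 ≤ d := by
    by_contra h
    push_neg at h
    interval_cases d
    · have : ρ.trace = 0 := by simp [Matrix.trace]
      rw [hρ.2] at this
      exact one_ne_zero this
    · have h1 : ρ 0 0 = 1 := by
        have := hρ.2
        simpa [Matrix.trace, Matrix.diag] using this
      have h2 : σ 0 0 = 1 := by
        have := hσ.2
        simpa [Matrix.trace, Matrix.diag] using this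
      have : ρ = σ := by
        ext i j
        rw [Subsingleton.elim i 0, Subsingleton.elim j 0, h1, h2]
      rw [this] at hlt
      exact lt_irrefl _ hlt
  set a : ℝ := f σ - f ρ with hadef
  have hapos : 0 < a := sub_pos.mpr hlt
  have hL : 0 < Real.log d := Real.log_pos (by exact_mod_cast (by omega : (1:ℕ) < d))
  -- midpoint construction
  set ν₀ : ∀ n : ℕ, Matrix (Fin (d ^ n)) (Fin (d ^ n)) ℂ := fun n => tpow' ρ n with hν₀
  set ν₁ : ∀ n : ℕ, Matrix (Fin (d ^ n)) (Fin (d ^ n)) ℂ := fun n => tpow' σ n with hν₁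
  set μ : ∀ n : ℕ, Matrix (Fin (d ^ n)) (Fin (d ^ n)) ℂ :=
    fun n => (((1:ℝ)/2 : ℝ) : ℂ) • (ν₀ n + ν₁ n) with hμ
  have hν₀d : ∀ n, IsDensityMatrix (ν₀ n) := fun n => tpow'_density hρ n
  have hν₁d : ∀ n, IsDensityMatrix (ν₁ n) := fun n => tpow'_density hσ n
  have hμd : ∀ n, IsDensityMatrix (μ n) := by
    intro n
    constructor
    · exact smul_real_psd ((hν₀d n).1.add (hν₁d n).1) _ (by norm_num)
    · rw [hμ]
      simp only [Matrix.trace_smul, Matrix.trace_add, (hν₀d n).2, (hν₁d n).2]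
      norm_num
  have hW1 : ∀ n, ν₀ n - μ n = (((1:ℝ)/2 : ℝ) : ℂ) • (ν₀ n - ν₁ n) := by
    intro n
    ext i j
    simp only [hμ, Matrix.sub_apply, Matrix.smul_apply, Matrix.add_apply, smul_eq_mul]
    push_cast
    ring
  have hW2 : ∀ n, μ n - ν₁ n = ν₀ n - μ n := by
    intro n
    ext i j
    simp only [hμ, Matrix.sub_apply, Matrix.smul_apply, Matrix.add_apply, smul_eq_mul]
    push_cast
    ring
  set tk : ℕ → ℝ := fun n => traceNorm (ν₀ n - μ n) with htk
  have hticc : ∀ n, tk n ∈ Set.Icc (0:ℝ) 1 := by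
    intro n
    have hsplit : ν₀ n - μ n
        = (((1:ℝ)/2 : ℝ) : ℂ) • ν₀ n - (((1:ℝ)/2 : ℝ) : ℂ) • ν₁ n := by
      rw [hW1 n, smul_sub]
    have hmem := traceNorm_sub_mem (smul_real_psd (hν₀d n).1 ((1:ℝ)/2) (by norm_num))
      (smul_real_psd (hν₁d n).1 ((1:ℝ)/2) (by norm_num))
    rw [← hsplit] at hmem
    have h₀ : ((((1:ℝ)/2 : ℝ) : ℂ) • ν₀ n).trace.re = 1/2 := by
      rw [Matrix.trace_smul, (hν₀d n).2]
      norm_num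
    have h₁ : ((((1:ℝ)/2 : ℝ) : ℂ) • ν₁ n).trace.re = 1/2 := by
      rw [Matrix.trace_smul, (hν₁d n).2]
      norm_num
    rw [h₀, h₁] at hmem
    rw [htk]
    constructor
    · exact hmem.1
    · calc traceNorm (ν₀ n - μ n) ≤ 1/2 + 1/2 := hmem.2
        _ = 1 := by norm_num
  -- the key lower bound on g
  have hgap : ∀ n : ℕ, 0 < n → (n : ℝ) * a ≤ 2 * g (d ^ n) (tk n) := by
    intro n hn
    have h₀ := hadd d n ρ hρ hn
    have h₁ := hadd d n σ hσ hn
    have htri : |f (ν₀ n) - f (ν₁ n)| ≤ |f (ν₀ n) - f (μ n)| + |f (μ n) - f (ν₁ n)| :=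
      abs_sub_le _ _ _
    have hb1 : |f (ν₀ n) - f (μ n)| ≤ g (d ^ n) (tk n) :=
      hineq (d ^ n) (ν₀ n) (μ n) (hν₀d n) (hμd n)
    have hb2 : |f (μ n) - f (ν₁ n)| ≤ g (d ^ n) (tk n) := by
      have := hineq (d ^ n) (μ n) (ν₁ n) (hμd n) (hν₁d n)
      rwa [hW2 n] at this
    have hval : f (ν₀ n) - f (ν₁ n) = -((n : ℝ) * a) := by
      show f (tpow' ρ n) - f (tpow' σ n) = _
      rw [h₀, h₁, hadef]
      ring
    have habs : |f (ν₀ n) - f (ν₁ n)| = (n : ℝ) * a := by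
      rw [hval, abs_neg, abs_of_nonneg (mul_nonneg (Nat.cast_nonneg n) hapos.le)]
    linarith
  -- derive the contradiction
  have hdk : Filter.Tendsto (fun n => d ^ n) Filter.atTop Filter.atTop :=
    tendsto_pow_atTop_atTop_of_one_lt (by omega)
  have hlim := hlog (fun n => d ^ n) tk hdk hticc
  have hev := hlim.eventually_lt_const (show (0:ℝ) < a / (2 * Real.log d) by positivity)
  obtain ⟨n, hn1, hn2⟩ := (hev.and (Filter.eventually_ge_atTop 1)).exists
  -- for this n, the quotient is at least a / (2 log d)
  have hlogdn : Real.log ((d ^ n : ℕ) : ℝ) = (n : ℝ) * Real.log d := by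
    push_cast
    rw [Real.log_pow]
  have hnpos : (0:ℝ) < n := by exact_mod_cast hn2
  have hdenpos : (0:ℝ) < (n : ℝ) * Real.log d := by positivity
  have hq : a / (2 * Real.log d) ≤ g (d ^ n) (tk n) / Real.log ((d ^ n : ℕ) : ℝ) := by
    rw [hlogdn]
    rw [div_le_div_iff₀ (by positivity) hdenpos]
    have := hgap n hn2
    nlinarith [hL, hnpos]
  exact lt_irrefl _ (hq.trans_lt hn1)
end

section
/- Let H be a Hermitian matrix on ℂ^d and ℂ^{d'} respectively (input and output Hamiltonians H, H'), and let Λ be a linear map from d×d matrices to d'×d' matrices satisfying the covariance condition Λ(e^{-iHt} X e^{iHt}) = e^{-iH't} Λ(X) e^{iH't} for all t ∈ ℝ and all X. Then for every density matrix ρ, the modes of asymmetry satisfy D(Λ(ρ)) ⊆ D(ρ): if Λ(ρ) has a nonzero matrix entry between eigenstates of H' with energy difference Δ, then ρ has a nonzero matrix entry between eigenstates of H with the same energy difference Δ. -/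
open Matrix ComplexOrder

/-- Time-evolution conjugation `X ↦ e^{-iHt} X e^{iHt}` for `H = diag(E)`. -/
noncomputable def timeConj {d : ℕ} (E : Fin d → ℝ) (t : ℝ)
    (X : Matrix (Fin d) (Fin d) ℂ) : Matrix (Fin d) (Fin d) ℂ :=
  NormedSpace.exp ((-(Complex.I * t)) • Matrix.diagonal fun k => (E k : ℂ)) * X *
    NormedSpace.exp ((Complex.I * t) • Matrix.diagonal fun k => (E k : ℂ))

/-- The modes of asymmetry of `ρ`: energy differences `E_i − E_j` over pairs with
`ρ_{ij} ≠ 0`. -/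
def modes {I : Type*} [Fintype I] (E : I → ℝ) (ρ : Matrix I I ℂ) : Set ℝ :=
  {x | ∃ i j, ρ i j ≠ 0 ∧ x = E i - E j}

/-- The character `t ↦ exp(-i t δ)` as a monoid hom on `Multiplicative ℝ`. -/
noncomputable def expChar (δ : ℝ) : Multiplicative ℝ →* ℂ where
  toFun t := Complex.exp (-(Complex.I * (Multiplicative.toAdd t : ℝ) * δ))
  map_one' := by simp
  map_mul' x y := by
    simp only [toAdd_mul]
    rw [← Complex.exp_add]
    push_cast
    ring_nf

lemma expChar_injective : Function.Injective expChar := by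
  intro a b h
  by_contra hab
  have hc : (a - b : ℝ) ≠ 0 := sub_ne_zero.mpr hab
  set t : ℝ := Real.pi / (a - b) with ht
  have h1 : Complex.exp (-(Complex.I * (t : ℂ) * a)) =
      Complex.exp (-(Complex.I * (t : ℂ) * b)) := by
    have := DFunLike.congr_fun h (Multiplicative.ofAdd t)
    simpa [expChar] using this
  have h2 : Complex.exp (-(Complex.I * (t : ℂ) * a) + Complex.I * (t : ℂ) * b) = 1 := by
    rw [Complex.exp_add, h1, ← Complex.exp_add]
    ring_nf
    exact Complex.exp_zero
  have h3 : -(Complex.I * (t : ℂ) * a) + Complex.I * (t : ℂ) * b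
      = -(Real.pi * Complex.I) := by
    have h4 : (t : ℂ) * ((a : ℂ) - b) = (Real.pi : ℂ) := by
      have h5 : t * (a - b) = Real.pi := by
        rw [ht]; exact div_mul_cancel₀ _ hc
      calc (t : ℂ) * ((a : ℂ) - b) = ((t * (a - b) : ℝ) : ℂ) := by push_cast; ring
        _ = (Real.pi : ℂ) := by rw [h5]
    calc -(Complex.I * (t : ℂ) * a) + Complex.I * (t : ℂ) * b
        = -(((t : ℂ) * ((a : ℂ) - b)) * Complex.I) := by ring
      _ = -(Real.pi * Complex.I) := by rw [h4]
  rw [h3, Complex.exp_neg, Complex.exp_pi_mul_I] at h2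
  norm_num at h2

lemma timeConj_apply {n : ℕ} (F : Fin n → ℝ) (t : ℝ) (X : Matrix (Fin n) (Fin n) ℂ)
    (a b : Fin n) :
    timeConj F t X a b = Complex.exp (-(Complex.I * t * ((F a : ℂ) - F b))) * X a b := by
  have hd : ∀ (z : ℂ), z • Matrix.diagonal (fun k : Fin n => (F k : ℂ)) =
      Matrix.diagonal (fun k => z * (F k : ℂ)) := by
    intro z; ext x y; by_cases hxy : x = y <;>
      simp [Matrix.diagonal_apply, hxy, mul_comm]
  rw [timeConj, hd, hd, Matrix.exp_diagonal, Matrix.exp_diagonal,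
    Matrix.mul_diagonal, Matrix.diagonal_mul]
  have he : ∀ (z : ℂ), NormedSpace.exp ((fun k : Fin n => z * (F k : ℂ))) = fun k =>
      Complex.exp (z * F k) := by
    intro z; rw [Pi.exp_def]; funext k; rw [Complex.exp_eq_exp_ℂ]
  rw [he, he]
  rw [mul_right_comm, ← Complex.exp_add]
  ring_nf

/-- A covariant linear map cannot create new modes of asymmetry: `D(Λ(ρ)) ⊆ D(ρ)`. -/
theorem modes_of_covariant_subset {d d' : ℕ} (E : Fin d → ℝ) (E' : Fin d' → ℝ)
    (Λ : Matrix (Fin d) (Fin d) ℂ →ₗ[ℂ] Matrix (Fin d') (Fin d') ℂ)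
    (hcov : ∀ (t : ℝ) (X : Matrix (Fin d) (Fin d) ℂ),
      Λ (timeConj E t X) = timeConj E' t (Λ X))
    (ρ : Matrix (Fin d) (Fin d) ℂ) (hρ : IsDensityMatrix ρ) :
    modes E' (Λ ρ) ⊆ modes E ρ := by
  classical
  rintro Δ ⟨i, j, hne, hΔ⟩
  set S : Finset ℝ := Finset.image (fun p : Fin d × Fin d => E p.1 - E p.2) Finset.univ with hS
  set comp : ℝ → Matrix (Fin d) (Fin d) ℂ :=
    fun δ => Matrix.of fun a b => if E a - E b = δ then ρ a b else 0 with hcomp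
  -- decomposition of the time-evolved ρ into modes
  have hTC : ∀ t : ℝ, timeConj E t ρ =
      ∑ δ ∈ S, Complex.exp (-(Complex.I * t * δ)) • comp δ := by
    intro t
    ext a b
    rw [timeConj_apply]
    have hmem : E a - E b ∈ S := by
      simp only [hS, Finset.mem_image]
      exact ⟨(a, b), Finset.mem_univ _, rfl⟩
    simp only [Matrix.sum_apply, Matrix.smul_apply, hcomp, Matrix.of_apply, smul_eq_mul,
      mul_ite, mul_zero]
    rw [Finset.sum_ite_eq S (E a - E b) (fun δ => Complex.exp (-(Complex.I * t * δ)) * ρ a b),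
      if_pos hmem]
    push_cast
    ring_nf
  -- the key almost-periodic identity at entry (i,j)
  have hkey : ∀ t : ℝ,
      ∑ δ ∈ S, Complex.exp (-(Complex.I * t * δ)) * (Λ (comp δ)) i j
        = Complex.exp (-(Complex.I * t * Δ)) * (Λ ρ) i j := by
    intro t
    have h1 := hcov t ρ
    rw [hTC t, map_sum] at h1
    have h2 := congrFun (congrFun h1 i) j
    rw [timeConj_apply] at h2
    simp only [LinearMap.map_smul, Matrix.sum_apply, Matrix.smul_apply, smul_eq_mul] at h2
    rw [hΔ]
    push_cast
    exact h2
  set T : Finset ℝ := insert Δ S with hT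
  set c : ℝ → ℂ := fun δ =>
    (if δ ∈ S then (Λ (comp δ)) i j else 0) - (if δ = Δ then (Λ ρ) i j else 0) with hc
  have hzero : (∑ δ : T, c δ • ((expChar (δ : ℝ) : Multiplicative ℝ → ℂ))) = 0 := by
    funext s
    have htot : ∑ δ ∈ T, c δ *
        Complex.exp (-(Complex.I * (Multiplicative.toAdd s : ℝ) * δ)) = 0 := by
      set t : ℝ := Multiplicative.toAdd s with htdef
      simp only [hc, sub_mul]
      rw [Finset.sum_sub_distrib]
      have e1 : ∑ δ ∈ T, (if δ ∈ S then (Λ (comp δ)) i j else 0) *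
          Complex.exp (-(Complex.I * t * δ))
          = ∑ δ ∈ S, (Λ (comp δ)) i j * Complex.exp (-(Complex.I * t * δ)) := by
        simp only [ite_mul, zero_mul]
        rw [Finset.sum_ite_mem, Finset.inter_eq_right.mpr (Finset.subset_insert _ _)]
      have e2 : ∑ δ ∈ T, (if δ = Δ then (Λ ρ) i j else 0) *
          Complex.exp (-(Complex.I * t * δ))
          = (Λ ρ) i j * Complex.exp (-(Complex.I * t * Δ)) := by
        simp only [ite_mul, zero_mul]
        rw [Finset.sum_ite_eq' T Δ (fun δ => (Λ ρ) i j *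
          Complex.exp (-(Complex.I * t * δ))), if_pos (Finset.mem_insert_self _ _)]
      rw [e1, e2, sub_eq_zero]
      calc ∑ δ ∈ S, (Λ (comp δ)) i j * Complex.exp (-(Complex.I * t * δ))
          = ∑ δ ∈ S, Complex.exp (-(Complex.I * t * δ)) * (Λ (comp δ)) i j := by
            simp [mul_comm]
        _ = Complex.exp (-(Complex.I * t * Δ)) * (Λ ρ) i j := hkey t
        _ = (Λ ρ) i j * Complex.exp (-(Complex.I * t * Δ)) := mul_comm _ _
    calc (∑ δ : T, c δ • ((expChar (δ : ℝ) : Multiplicative ℝ → ℂ))) s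
        = ∑ δ : T, c δ * Complex.exp (-(Complex.I * (Multiplicative.toAdd s : ℝ) * δ)) := by
          simp [expChar]
      _ = ∑ δ ∈ T, c δ * Complex.exp (-(Complex.I * (Multiplicative.toAdd s : ℝ) * δ)) := by
          rw [← Finset.sum_coe_sort T]
      _ = 0 := htot
  have li : LinearIndependent ℂ
      (fun δ : T => ((expChar (δ : ℝ) : Multiplicative ℝ → ℂ))) :=
    (linearIndependent_monoidHom (Multiplicative ℝ) ℂ).comp
      (fun δ : T => expChar (δ : ℝ)) (expChar_injective.comp Subtype.val_injective)
  have hcΔ : c Δ = 0 := by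
    have := Fintype.linearIndependent_iff.mp li (fun δ : T => c δ) hzero
      ⟨Δ, Finset.mem_insert_self _ _⟩
    simpa using this
  have hΛcomp : (Λ (comp Δ)) i j ≠ 0 := by
    simp only [hc, if_pos rfl, sub_eq_zero] at hcΔ
    by_cases hmem : Δ ∈ S
    · rw [if_pos hmem] at hcΔ
      rw [hcΔ]; exact hne
    · rw [if_neg hmem] at hcΔ
      exact absurd hcΔ.symm hne
  by_contra hgoal
  simp only [modes, Set.mem_setOf_eq] at hgoal
  push_neg at hgoal
  have hczero : comp Δ = 0 := by
    ext a b
    simp only [hcomp, Matrix.of_apply, Matrix.zero_apply]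
    by_cases hab : E a - E b = Δ
    · rw [if_pos hab]
      by_contra hρab
      exact (hgoal a b hρab) hab.symm
    · rw [if_neg hab]
  rw [hczero, map_zero] at hΛcomp
  exact hΛcomp (by simp)
end

section
/- Correlated-catalyst construction: let ρ be a state on S, let τ be a state on S^{⊗n}, and for 0 ≤ i ≤ n let τ_i denote the marginal of τ on the first i factors (with τ_0 trivial and τ_n = τ). Define the catalyst state c = (1/n) Σ_{k=1}^n ρ^{⊗(k−1)} ⊗ τ_{n−k} ⊗ |k⟩⟨k| on S^{⊗(n−1)} ⊗ R, where R is an n-dimensional register. Consider the state ω = (1/n)[ Σ_{k=1}^{n−1} ρ^{⊗k} ⊗ τ_{n−k} ⊗ |k⟩⟨k| + τ ⊗ |n⟩⟨n| ] on S^{⊗n} ⊗ R, followed by the register relabeling k ↦ k+1 (mod n). Then: (a) tracing out the last S-factor of the relabeled state gives back exactly c, and (b) tracing out the first n−1 S-factors and the register gives (1/n) Σ_{k=1}^n Tr_{\k}(τ), the average single-copy marginal of τ. -/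
open Matrix ComplexOrder

variable {d m : ℕ}

/-- The marginal of `τ` on its first `j` sites (all later sites traced out), expressed as a
function of full site-configurations which depends only on the sites `< j`. -/
noncomputable def headM (τ : Matrix (Fin (m+1) → Fin d) (Fin (m+1) → Fin d) ℂ) (j : ℕ)
    (f g : Fin (m+1) → Fin d) : ℂ :=
  ∑ h : {i : Fin (m+1) // j ≤ (i : ℕ)} → Fin d,
    τ (fun i => if hi : j ≤ (i : ℕ) then h ⟨i, hi⟩ else f i)
      (fun i => if hi : j ≤ (i : ℕ) then h ⟨i, hi⟩ else g i)

/-- Shift a configuration of the `m`-site catalyst system by `s` positions. -/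
def shiftC [NeZero d] (s : ℕ) (f : Fin m → Fin d) : Fin (m+1) → Fin d :=
  fun i => if h : (i : ℕ) + s < m then f ⟨(i : ℕ) + s, h⟩ else 0

/-- Shift a configuration of the `(m+1)`-site system by `s` positions. -/
def shiftS [NeZero d] (s : ℕ) (f : Fin (m+1) → Fin d) : Fin (m+1) → Fin d :=
  fun i => if h : (i : ℕ) + s < m + 1 then f ⟨(i : ℕ) + s, h⟩ else 0

/-- The catalyst `c = (1/n) Σ_{k=1}^n ρ^{⊗(k−1)} ⊗ τ_{n−k} ⊗ |k⟩⟨k|` (here `n = m+1` and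
the register value `a ∈ Fin (m+1)` corresponds to `k = a+1`). -/
noncomputable def catalyst [NeZero d] (ρ : Matrix (Fin d) (Fin d) ℂ)
    (τ : Matrix (Fin (m+1) → Fin d) (Fin (m+1) → Fin d) ℂ) :
    Matrix ((Fin m → Fin d) × Fin (m+1)) ((Fin m → Fin d) × Fin (m+1)) ℂ :=
  Matrix.of fun p q =>
    if p.2 = q.2 then
      ((m : ℂ) + 1)⁻¹ *
        (∏ i : Fin m, if (i : ℕ) < (p.2 : ℕ) then ρ (p.1 i) (q.1 i) else 1) *
        headM τ (m - (p.2 : ℕ)) (shiftC (p.2 : ℕ) p.1) (shiftC (p.2 : ℕ) q.1)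
    else 0

/-- The intermediate state
`ω = (1/n)[Σ_{k=1}^{n−1} ρ^{⊗k} ⊗ τ_{n−k} ⊗ |k⟩⟨k| + τ ⊗ |n⟩⟨n|]` (with `n = m+1`,
register value `a` corresponding to `k = a+1`). -/
noncomputable def omegaState [NeZero d] (ρ : Matrix (Fin d) (Fin d) ℂ)
    (τ : Matrix (Fin (m+1) → Fin d) (Fin (m+1) → Fin d) ℂ) :
    Matrix ((Fin (m+1) → Fin d) × Fin (m+1)) ((Fin (m+1) → Fin d) × Fin (m+1)) ℂ :=
  Matrix.of fun p q =>
    if p.2 = q.2 then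
      ((m : ℂ) + 1)⁻¹ *
        (if (p.2 : ℕ) = m then τ p.1 q.1
         else (∏ i : Fin (m+1), if (i : ℕ) < (p.2 : ℕ) + 1 then ρ (p.1 i) (q.1 i) else 1) *
           headM τ (m - (p.2 : ℕ))
             (shiftS ((p.2 : ℕ) + 1) p.1) (shiftS ((p.2 : ℕ) + 1) q.1))
    else 0

/-- `ω` after the register relabeling `k ↦ k+1 (mod n)`. -/
noncomputable def omegaRelabeled [NeZero d] (ρ : Matrix (Fin d) (Fin d) ℂ)
    (τ : Matrix (Fin (m+1) → Fin d) (Fin (m+1) → Fin d) ℂ) :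
    Matrix ((Fin (m+1) → Fin d) × Fin (m+1)) ((Fin (m+1) → Fin d) × Fin (m+1)) ℂ :=
  Matrix.of fun p q => omegaState ρ τ (p.1, p.2 - 1) (q.1, q.2 - 1)

/-- The single-site marginal `Tr_{\k}(τ)` of `τ`. -/
noncomputable def singleMarg (τ : Matrix (Fin (m+1) → Fin d) (Fin (m+1) → Fin d) ℂ)
    (k : Fin (m+1)) (x y : Fin d) : ℂ :=
  ∑ f : Fin (m+1) → Fin d, if f k = x then τ f (Function.update f k y) else 0


lemma headM_congr (τ : Matrix (Fin (m+1) → Fin d) (Fin (m+1) → Fin d) ℂ) (j : ℕ)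
    {f g f' g' : Fin (m+1) → Fin d}
    (hf : ∀ i : Fin (m+1), (i : ℕ) < j → f i = f' i)
    (hg : ∀ i : Fin (m+1), (i : ℕ) < j → g i = g' i) :
    headM τ j f g = headM τ j f' g' := by
  unfold headM
  refine Finset.sum_congr rfl fun h _ => ?_
  have hgen : ∀ F F' : Fin (m+1) → Fin d, (∀ i : Fin (m+1), (i : ℕ) < j → F i = F' i) →
      (fun i : Fin (m+1) => if hi : j ≤ (i : ℕ) then h ⟨i, hi⟩ else F i)
      = (fun i : Fin (m+1) => if hi : j ≤ (i : ℕ) then h ⟨i, hi⟩ else F' i) := by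
    intro F F' hFF
    funext i
    by_cases hi : j ≤ (i : ℕ)
    · rw [dif_pos hi, dif_pos hi]
    · rw [dif_neg hi, dif_neg hi]; exact hFF i (by omega)
  rw [hgen f f' hf, hgen g g' hg]

def splitHead (d : ℕ) {m : ℕ} (j : ℕ) (hj : j < m + 1) :
    ({i : Fin (m+1) // j ≤ (i : ℕ)} → Fin d)
      ≃ (Fin d × ({i : Fin (m+1) // j + 1 ≤ (i : ℕ)} → Fin d)) where
  toFun h := (h ⟨⟨j, hj⟩, le_rfl⟩, fun i => h ⟨i.1, Nat.le_of_succ_le i.2⟩)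
  invFun p i := if h : j + 1 ≤ (i.1 : ℕ) then p.2 ⟨i.1, h⟩ else p.1
  left_inv h := by
    funext i
    dsimp only
    by_cases hle : j + 1 ≤ (i.1 : ℕ)
    · rw [dif_pos hle]
    · rw [dif_neg hle]
      have h2 := i.2
      have hi : i = ⟨⟨j, hj⟩, le_rfl⟩ := Subtype.ext (Fin.ext (by show (i.1:ℕ) = j; omega))
      rw [hi]
  right_inv p := by
    refine Prod.ext ?_ ?_
    · dsimp only
      rw [dif_neg (by simp)]
    · funext i
      dsimp only
      rw [dif_pos i.2]

lemma headM_succ (τ : Matrix (Fin (m+1) → Fin d) (Fin (m+1) → Fin d) ℂ) (j : ℕ) (hj : j < m + 1)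
    (F G : Fin (m+1) → Fin d) :
    ∑ x : Fin d, headM τ (j+1) (Function.update F ⟨j, hj⟩ x) (Function.update G ⟨j, hj⟩ x)
      = headM τ j F G := by
  have key : ∀ (F : Fin (m+1) → Fin d) (h : {i : Fin (m+1) // j ≤ (i : ℕ)} → Fin d),
      (fun i : Fin (m+1) => if hi : j + 1 ≤ (i : ℕ) then (splitHead d j hj h).2 ⟨i, hi⟩
        else Function.update F ⟨j, hj⟩ ((splitHead d j hj h).1) i)
      = fun i : Fin (m+1) => if hi : j ≤ (i : ℕ) then h ⟨i, hi⟩ else F i := by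
    intro F h
    funext i
    by_cases h1 : j + 1 ≤ (i : ℕ)
    · rw [dif_pos h1, dif_pos (by omega : j ≤ (i : ℕ))]
      rfl
    · rw [dif_neg h1]
      by_cases h2 : j ≤ (i : ℕ)
      · have hi2 : i = ⟨j, hj⟩ := Fin.ext (by show (i:ℕ) = j; omega)
        subst hi2
        rw [dif_pos h2, Function.update_self]
        rfl
      · rw [dif_neg h2, Function.update_of_ne (Fin.ne_of_val_ne (by show (i:ℕ) ≠ j; omega))]
  simp only [headM]
  rw [← Fintype.sum_prod_type']
  rw [← Equiv.sum_comp (splitHead d j hj)]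
  refine Finset.sum_congr rfl fun h _ => ?_
  rw [key F h, key G h]

lemma headM_top (τ : Matrix (Fin (m+1) → Fin d) (Fin (m+1) → Fin d) ℂ)
    (f g : Fin (m+1) → Fin d) : headM τ (m+1) f g = τ f g := by
  haveI : IsEmpty {i : Fin (m+1) // m + 1 ≤ (i : ℕ)} := ⟨fun i => by have := i.1.isLt; omega⟩
  rw [headM, Fintype.sum_unique]
  have hA : ∀ (F : Fin (m+1) → Fin d) (h : {i : Fin (m+1) // m + 1 ≤ (i : ℕ)} → Fin d),
      (fun i : Fin (m+1) => if hi : m + 1 ≤ (i : ℕ) then h ⟨i, hi⟩ else F i) = F := by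
    intro F h
    funext i
    rw [dif_neg (by have := i.isLt; omega)]
  rw [hA f _, hA g _]

lemma headM_last (τ : Matrix (Fin (m+1) → Fin d) (Fin (m+1) → Fin d) ℂ)
    (F G : Fin (m+1) → Fin d) :
    headM τ m F G = ∑ x : Fin d,
      τ (Function.update F (Fin.last m) x) (Function.update G (Fin.last m) x) := by
  rw [← headM_succ τ m (by omega) F G]
  refine Finset.sum_congr rfl fun x _ => ?_
  rw [headM_top]
  rfl

lemma snoc_eq (f : Fin m → Fin d) (x : Fin d) (i : Fin (m+1)) (h : (i : ℕ) < m) :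
    (Fin.snoc f x : Fin (m+1) → Fin d) i = f ⟨i, h⟩ := by
  simp [Fin.snoc, h]
  exact congrArg f (Fin.ext rfl)

lemma snoc_last' (f : Fin m → Fin d) (x : Fin d) (i : Fin (m+1)) (h : (i : ℕ) = m) :
    (Fin.snoc f x : Fin (m+1) → Fin d) i = x := by
  have : i = Fin.last m := Fin.ext h
  rw [this, Fin.snoc_last]

lemma shiftS_snoc [NeZero d] (a : ℕ) (ha1 : 1 ≤ a) (ha2 : a ≤ m) (f : Fin m → Fin d) (x : Fin d) :
    shiftS a (Fin.snoc f x) = Function.update (shiftC a f) ⟨m - a, by omega⟩ x := by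
  funext i
  unfold shiftS shiftC
  by_cases h1 : (i : ℕ) + a < m + 1
  · rw [dif_pos h1]
    by_cases h2 : (i : ℕ) + a < m
    · rw [snoc_eq f x _ (by show (i:ℕ) + a < m; exact h2),
        Function.update_of_ne (Fin.ne_of_val_ne (by show (i:ℕ) ≠ m - a; omega))]
      rw [dif_pos h2]
    · have hi : i = ⟨m - a, by omega⟩ := Fin.ext (by show (i:ℕ) = m - a; omega)
      rw [snoc_last' f x _ (by show (i : ℕ) + a = m; omega), hi, Function.update_self]
  · rw [dif_neg h1, Function.update_of_ne (Fin.ne_of_val_ne (by show (i:ℕ) ≠ m - a; omega))]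
    rw [dif_neg (by omega)]

lemma update_shiftC_zero [NeZero d] (f : Fin m → Fin d) (x : Fin d) :
    Function.update (shiftC (m := m) 0 f) (Fin.last m) x = Fin.snoc f x := by
  funext i
  by_cases h : (i : ℕ) < m
  · rw [Function.update_of_ne (Fin.ne_of_val_ne (by show (i:ℕ) ≠ m; omega)),
      snoc_eq f x i h]
    unfold shiftC
    rw [dif_pos (by omega : (i:ℕ) + 0 < m)]
    exact congrArg f (Fin.ext (by show (i:ℕ) + 0 = (i:ℕ); omega))
  · have hi : i = Fin.last m := Fin.ext (by have := i.isLt; show (i:ℕ) = m; omega)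
    subst hi
    rw [Function.update_self, Fin.snoc_last]

lemma prod_rho (ρ : Matrix (Fin d) (Fin d) ℂ) (a : ℕ) (ha : a ≤ m)
    (F G : Fin (m+1) → Fin d) (f g : Fin m → Fin d)
    (hF : ∀ (i : Fin (m+1)) (h : (i : ℕ) < m), F i = f ⟨i, h⟩)
    (hG : ∀ (i : Fin (m+1)) (h : (i : ℕ) < m), G i = g ⟨i, h⟩) :
    (∏ i : Fin (m+1), if (i : ℕ) < a then ρ (F i) (G i) else 1)
      = ∏ i : Fin m, if (i : ℕ) < a then ρ (f i) (g i) else 1 := by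
  rw [Fin.prod_univ_castSucc]
  rw [if_neg (by show ¬ ((Fin.last m : Fin (m+1)) : ℕ) < a; simp; omega), mul_one]
  refine Finset.prod_congr rfl fun i _ => ?_
  have hc : ((Fin.castSucc i : Fin (m+1)) : ℕ) = (i : ℕ) := rfl
  by_cases h : (i : ℕ) < a
  · rw [if_pos (by rw [hc]; exact h), if_pos h, hF _ (by rw [hc]; exact i.isLt),
      hG _ (by rw [hc]; exact i.isLt)]
    exact congrArg₂ ρ (congrArg f (Fin.ext hc)) (congrArg g (Fin.ext hc))
  · rw [if_neg (by rw [hc]; exact h), if_neg h]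

lemma sum_prod_diag {σ : Type*} [Fintype σ] [DecidableEq σ] (ρ : Matrix (Fin d) (Fin d) ℂ)
    (hρ : ρ.trace = 1) :
    ∑ h : σ → Fin d, ∏ i : σ, ρ (h i) (h i) = 1 := by
  rw [← Fintype.piFinset_univ,
    Finset.sum_prod_piFinset (Finset.univ : Finset (Fin d)) (fun (_ : σ) (v : Fin d) => ρ v v)]
  have ht : ∑ j : Fin d, ρ j j = 1 := by
    simpa [Matrix.trace, Matrix.diag] using hρ
  simp [ht]

def extendAt (c : Fin (m+1)) (u : {i : Fin (m+1) // i ≠ c} → Fin d) (z : Fin d) :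
    Fin (m+1) → Fin d :=
  fun i => if h : i = c then z else u ⟨i, h⟩

def fullSplit (d : ℕ) {m : ℕ} (c : Fin (m+1)) :
    (Fin d × ({i : Fin (m+1) // i ≠ c} → Fin d)) ≃ (Fin (m+1) → Fin d) where
  toFun p := extendAt c p.2 p.1
  invFun f := (f c, fun i => f i.1)
  left_inv p := by
    refine Prod.ext ?_ ?_
    · dsimp only [extendAt]
      rw [dif_pos rfl]
    · funext i
      dsimp only [extendAt]
      rw [dif_neg i.2]
  right_inv f := by
    funext i
    dsimp only [extendAt]
    by_cases h : i = c
    · subst h; rw [dif_pos rfl]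
    · rw [dif_neg h]

lemma extendAt_apply_self (c : Fin (m+1)) (u : {i : Fin (m+1) // i ≠ c} → Fin d) (z : Fin d) :
    extendAt c u z c = z := by
  unfold extendAt; rw [dif_pos rfl]

lemma update_extendAt (c : Fin (m+1)) (u : {i : Fin (m+1) // i ≠ c} → Fin d) (z y : Fin d) :
    Function.update (extendAt c u z) c y = extendAt c u y := by
  funext i
  by_cases h : i = c
  · subst h; rw [Function.update_self, extendAt_apply_self]
  · rw [Function.update_of_ne h]
    unfold extendAt
    rw [dif_neg h, dif_neg h]

lemma singleMarg_eq (τ : Matrix (Fin (m+1) → Fin d) (Fin (m+1) → Fin d) ℂ)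
    (c : Fin (m+1)) (x y : Fin d) :
    singleMarg τ c x y
      = ∑ u : {i : Fin (m+1) // i ≠ c} → Fin d, τ (extendAt c u x) (extendAt c u y) := by
  unfold singleMarg
  rw [← Equiv.sum_comp (fullSplit d c), Fintype.sum_prod_type]
  have hstep : ∀ (z : Fin d) (u : {i : Fin (m+1) // i ≠ c} → Fin d),
      (if (fullSplit d c (z, u)) c = x then
        τ (fullSplit d c (z, u)) (Function.update (fullSplit d c (z, u)) c y) else 0)
      = if z = x then τ (extendAt c u z) (extendAt c u y) else 0 := by
    intro z u
    have h1 : fullSplit d c (z, u) = extendAt c u z := rfl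
    rw [h1, extendAt_apply_self, update_extendAt]
  simp only [hstep]
  rw [Finset.sum_comm]
  refine Finset.sum_congr rfl fun u _ => ?_
  rw [Finset.sum_ite_eq' Finset.univ x (fun z => τ (extendAt c u z) (extendAt c u y))]
  simp

def lastEquiv (d m : ℕ) : ({i : Fin (m+1) // i ≠ Fin.last m} → Fin d) ≃ (Fin m → Fin d) where
  toFun u i := u ⟨Fin.castSucc i, (Fin.castSucc_lt_last i).ne⟩
  invFun h i := h ⟨(i.1 : ℕ), by
    have h1 := i.1.isLt
    have h2 : (i.1 : ℕ) ≠ m := fun hc => i.2 (Fin.ext hc)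
    omega⟩
  left_inv u := by
    funext i
    exact congrArg u (Subtype.ext (Fin.ext rfl))
  right_inv h := by
    funext i
    exact congrArg h (Fin.ext rfl)

lemma extendAt_last (u : {i : Fin (m+1) // i ≠ Fin.last m} → Fin d) (z : Fin d) :
    extendAt (Fin.last m) u z = Fin.snoc (lastEquiv d m u) z := by
  funext i
  by_cases h : i = Fin.last m
  · subst h
    rw [extendAt_apply_self, Fin.snoc_last]
  · have hlt : (i : ℕ) < m := by
      have h1 := i.isLt
      have h2 : (i : ℕ) ≠ m := fun hc => h (Fin.ext hc)
      omega
    rw [snoc_eq _ z i hlt]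
    unfold extendAt
    rw [dif_neg h]
    exact congrArg u (Subtype.ext (Fin.ext rfl))

lemma singleMarg_last (τ : Matrix (Fin (m+1) → Fin d) (Fin (m+1) → Fin d) ℂ) (x y : Fin d) :
    singleMarg τ (Fin.last m) x y
      = ∑ h : Fin m → Fin d, τ (Fin.snoc h x) (Fin.snoc h y) := by
  rw [singleMarg_eq]
  rw [← Equiv.sum_comp (lastEquiv d m)]
  refine Finset.sum_congr rfl fun u _ => ?_
  rw [extendAt_last u x, extendAt_last u y]

def mixLow (a : ℕ) (ha2 : a ≤ m) (h2 : {i : Fin m // ¬ (i : ℕ) < a} → Fin d) (z : Fin d) :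
    Fin (m+1) → Fin d :=
  fun i => if h : (i : ℕ) < m - a then
    h2 ⟨⟨(i : ℕ) + a, by omega⟩, by show ¬ ((i : ℕ) + a < a); omega⟩ else z

def restEquiv (d : ℕ) {m : ℕ} (a : ℕ) (ha1 : 1 ≤ a) (ha2 : a ≤ m) :
    (({i : Fin m // ¬ (i : ℕ) < a} → Fin d) × ({i : Fin (m+1) // m - a + 1 ≤ (i : ℕ)} → Fin d))
      ≃ ({i : Fin (m+1) // i ≠ ⟨m - a, by omega⟩} → Fin d) where
  toFun p i :=
    if h : (i.1 : ℕ) < m - a then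
      p.1 ⟨⟨(i.1 : ℕ) + a, by omega⟩, by show ¬ ((i.1 : ℕ) + a < a); omega⟩
    else
      p.2 ⟨i.1, by
        have h3 : (i.1 : ℕ) ≠ m - a := fun hc => i.2 (Fin.ext hc)
        omega⟩
  invFun u :=
    (fun i => u ⟨⟨(i.1 : ℕ) - a, by have := i.1.isLt; omega⟩, by
        refine Fin.ne_of_val_ne ?_
        show (i.1 : ℕ) - a ≠ m - a
        have h1 := i.1.isLt
        have h2 : ¬ (i.1 : ℕ) < a := i.2
        omega⟩,
     fun i => u ⟨i.1, Fin.ne_of_val_ne (by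
        show (i.1 : ℕ) ≠ m - a
        have := i.2
        omega)⟩)
  left_inv p := by
    refine Prod.ext ?_ ?_
    · funext i
      dsimp only
      have h2 : ¬ (i.1 : ℕ) < a := i.2
      have h1 := i.1.isLt
      rw [dif_pos (by show (i.1 : ℕ) - a < m - a; omega)]
      exact congrArg p.1 (Subtype.ext (Fin.ext (by show (i.1 : ℕ) - a + a = (i.1 : ℕ); omega)))
    · funext i
      dsimp only
      have h2 := i.2
      rw [dif_neg (by show ¬ (i.1 : ℕ) < m - a; omega)]
  right_inv u := by
    funext i
    dsimp only
    by_cases h : (i.1 : ℕ) < m - a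
    · rw [dif_pos h]
      exact congrArg u (Subtype.ext (Fin.ext (by show (i.1 : ℕ) + a - a = (i.1 : ℕ); omega)))
    · rw [dif_neg h]

lemma sum_headM_mixLow (τ : Matrix (Fin (m+1) → Fin d) (Fin (m+1) → Fin d) ℂ)
    (a : ℕ) (ha1 : 1 ≤ a) (ha2 : a ≤ m) (x y : Fin d) :
    ∑ h2 : {i : Fin m // ¬ (i : ℕ) < a} → Fin d,
      headM τ (m - a + 1) (mixLow a ha2 h2 x) (mixLow a ha2 h2 y)
      = singleMarg τ ⟨m - a, by omega⟩ x y := by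
  rw [singleMarg_eq]
  simp only [headM]
  rw [← Fintype.sum_prod_type']
  refine Fintype.sum_equiv (restEquiv d a ha1 ha2) _ _ fun p => ?_
  have key : ∀ z : Fin d,
      (fun i : Fin (m+1) => if hi : m - a + 1 ≤ (i : ℕ) then p.2 ⟨i, hi⟩
        else mixLow a ha2 p.1 z i)
      = extendAt ⟨m - a, by omega⟩ (restEquiv d a ha1 ha2 p) z := by
    intro z
    funext i
    by_cases h1 : m - a + 1 ≤ (i : ℕ)
    · rw [dif_pos h1]
      unfold extendAt
      rw [dif_neg (Fin.ne_of_val_ne (by show (i : ℕ) ≠ m - a; omega))]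
      show _ = (restEquiv d a ha1 ha2) p ⟨i, _⟩
      unfold restEquiv
      dsimp only [Equiv.coe_fn_mk]
      rw [dif_neg (by show ¬ (i : ℕ) < m - a; omega)]
    · rw [dif_neg h1]
      by_cases h2 : (i : ℕ) < m - a
      · unfold mixLow extendAt
        rw [dif_pos h2, dif_neg (Fin.ne_of_val_ne (by show (i : ℕ) ≠ m - a; omega))]
        show _ = (restEquiv d a ha1 ha2) p ⟨i, _⟩
        unfold restEquiv
        dsimp only [Equiv.coe_fn_mk]
        rw [dif_pos (by show (i : ℕ) < m - a; exact h2)]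
      · have hi : i = ⟨m - a, by omega⟩ := Fin.ext (by show (i : ℕ) = m - a; omega)
        rw [hi]
        unfold mixLow
        rw [dif_neg (by show ¬ (m - a < m - a); omega), extendAt_apply_self]
  rw [key x, key y]

lemma partB [NeZero d] (ρ : Matrix (Fin d) (Fin d) ℂ) (hρ : ρ.trace = 1)
    (τ : Matrix (Fin (m+1) → Fin d) (Fin (m+1) → Fin d) ℂ)
    (a : ℕ) (ha1 : 1 ≤ a) (ha2 : a ≤ m) (x y : Fin d) :
    ∑ h : Fin m → Fin d,
      (∏ i : Fin m, if (i : ℕ) < a then ρ (h i) (h i) else 1) *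
        headM τ (m - a + 1) (Function.update (shiftC a h) ⟨m - a, by omega⟩ x)
          (Function.update (shiftC a h) ⟨m - a, by omega⟩ y)
      = singleMarg τ ⟨m - a, by omega⟩ x y := by
  classical
  set e3 := Equiv.piEquivPiSubtypeProd (fun i : Fin m => (i : ℕ) < a) (fun _ => Fin d) with he3
  have hsymm : ∀ (h1 : {i : Fin m // (i : ℕ) < a} → Fin d)
      (h2 : {i : Fin m // ¬ (i : ℕ) < a} → Fin d) (i : Fin m),
      e3.symm (h1, h2) i = if h : (i : ℕ) < a then h1 ⟨i, h⟩ else h2 ⟨i, h⟩ := by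
    intro h1 h2 i
    rw [he3]
    rfl
  have hprod : ∀ (h1 : {i : Fin m // (i : ℕ) < a} → Fin d)
      (h2 : {i : Fin m // ¬ (i : ℕ) < a} → Fin d),
      (∏ i : Fin m, if (i : ℕ) < a then ρ (e3.symm (h1, h2) i) (e3.symm (h1, h2) i) else 1)
        = ∏ i : {i : Fin m // (i : ℕ) < a}, ρ (h1 i) (h1 i) := by
    intro h1 h2
    rw [← Finset.prod_filter]
    rw [Finset.prod_subtype (p := fun i : Fin m => (i : ℕ) < a)
      (Finset.univ.filter fun i : Fin m => (i : ℕ) < a)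
      (by intro i; simp) (fun i => ρ (e3.symm (h1, h2) i) (e3.symm (h1, h2) i))]
    refine Finset.prod_congr rfl fun i _ => ?_
    rw [hsymm h1 h2 i.1, dif_pos i.2]
  have hagree : ∀ (h1 : {i : Fin m // (i : ℕ) < a} → Fin d)
      (h2 : {i : Fin m // ¬ (i : ℕ) < a} → Fin d) (z : Fin d) (i : Fin (m+1)),
      (i : ℕ) < m - a + 1 →
      Function.update (shiftC a (e3.symm (h1, h2))) ⟨m - a, by omega⟩ z i
        = mixLow a ha2 h2 z i := by
    intro h1 h2 z i hi
    by_cases hlt : (i : ℕ) < m - a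
    · rw [Function.update_of_ne (Fin.ne_of_val_ne (by show (i : ℕ) ≠ m - a; omega))]
      unfold shiftC mixLow
      rw [dif_pos (by omega : (i : ℕ) + a < m), dif_pos hlt]
      rw [hsymm h1 h2 _]
      rw [dif_neg (by show ¬ ((i : ℕ) + a < a); omega)]
    · have hieq : i = ⟨m - a, by omega⟩ := Fin.ext (by show (i : ℕ) = m - a; omega)
      rw [hieq, Function.update_self]
      unfold mixLow
      rw [dif_neg (by show ¬ (m - a < m - a); omega)]
  calc
    ∑ h : Fin m → Fin d,
      (∏ i : Fin m, if (i : ℕ) < a then ρ (h i) (h i) else 1) *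
        headM τ (m - a + 1) (Function.update (shiftC a h) ⟨m - a, by omega⟩ x)
          (Function.update (shiftC a h) ⟨m - a, by omega⟩ y)
        = ∑ p : ({i : Fin m // (i : ℕ) < a} → Fin d) × ({i : Fin m // ¬ (i : ℕ) < a} → Fin d),
            (∏ i : Fin m, if (i : ℕ) < a then ρ (e3.symm p i) (e3.symm p i) else 1) *
              headM τ (m - a + 1)
                (Function.update (shiftC a (e3.symm p)) ⟨m - a, by omega⟩ x)
                (Function.update (shiftC a (e3.symm p)) ⟨m - a, by omega⟩ y) := by
          exact (Equiv.sum_comp e3.symm _).symm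
    _ = ∑ h1 : {i : Fin m // (i : ℕ) < a} → Fin d,
          ∑ h2 : {i : Fin m // ¬ (i : ℕ) < a} → Fin d,
            (∏ i : {i : Fin m // (i : ℕ) < a}, ρ (h1 i) (h1 i)) *
              headM τ (m - a + 1) (mixLow a ha2 h2 x) (mixLow a ha2 h2 y) := by
          rw [Fintype.sum_prod_type]
          refine Finset.sum_congr rfl fun h1 _ => Finset.sum_congr rfl fun h2 _ => ?_
          rw [hprod h1 h2]
          rw [headM_congr τ (m - a + 1) (hagree h1 h2 x) (hagree h1 h2 y)]
    _ = (∑ h1 : {i : Fin m // (i : ℕ) < a} → Fin d,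
          ∏ i : {i : Fin m // (i : ℕ) < a}, ρ (h1 i) (h1 i)) *
        (∑ h2 : {i : Fin m // ¬ (i : ℕ) < a} → Fin d,
          headM τ (m - a + 1) (mixLow a ha2 h2 x) (mixLow a ha2 h2 y)) := by
          rw [Finset.sum_mul_sum]
    _ = singleMarg τ ⟨m - a, by omega⟩ x y := by
          rw [sum_prod_diag ρ hρ, one_mul, sum_headM_mixLow τ a ha1 ha2 x y]

/-- Correlated-catalyst construction: (a) tracing out the last `S`-factor of the relabeled
state `ω'` gives back exactly the catalyst `c`, and (b) tracing out the first `n−1`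
`S`-factors and the register gives the average single-copy marginal `(1/n) Σ_k Tr_{\k}(τ)`. -/
theorem correlated_catalyst_construction [NeZero d]
    (ρ : Matrix (Fin d) (Fin d) ℂ) (hρ : IsDensityMatrix ρ)
    (τ : Matrix (Fin (m+1) → Fin d) (Fin (m+1) → Fin d) ℂ) (hτ : IsDensityMatrix τ) :
    (∀ (f g : Fin m → Fin d) (a b : Fin (m+1)),
      (∑ x : Fin d, omegaRelabeled ρ τ (Fin.snoc f x, a) (Fin.snoc g x, b))
        = catalyst ρ τ (f, a) (g, b)) ∧
    (∀ x y : Fin d,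
      (∑ a : Fin (m+1), ∑ h : Fin m → Fin d,
          omegaRelabeled ρ τ (Fin.snoc h x, a) (Fin.snoc h y, a))
        = ((m : ℂ) + 1)⁻¹ * ∑ k : Fin (m+1), singleMarg τ k x y) := by
  obtain ⟨-, hρt⟩ := hρ
  constructor
  · -- part (a)
    intro f g a b
    by_cases hab : a = b
    · subst hab
      simp only [omegaRelabeled, omegaState, catalyst, Matrix.of_apply, eq_self_iff_true,
        if_true]
      by_cases hz : a = 0
      · subst hz
        have hval : ((0 - 1 : Fin (m+1)) : ℕ) = m := by rw [Fin.coe_sub_one]; simp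
        have h0 : ((0 : Fin (m+1)) : ℕ) = 0 := rfl
        simp only [hval, h0, eq_self_iff_true, if_true, Nat.not_lt_zero, if_false,
          Finset.prod_const_one, Nat.sub_zero, mul_one]
        rw [headM_last, ← Finset.mul_sum]
        refine congrArg _ (Finset.sum_congr rfl fun z _ => ?_)
        rw [update_shiftC_zero f z, update_shiftC_zero g z]
      · have ha1 : 1 ≤ (a : ℕ) := by
          rcases Nat.eq_zero_or_pos (a : ℕ) with h | h
          · exact absurd (Fin.ext h) hz
          · exact h
        have ha2 : (a : ℕ) ≤ m := by have := a.isLt; omega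
        have hv : ((a - 1 : Fin (m+1)) : ℕ) = (a : ℕ) - 1 := by
          rw [Fin.coe_sub_one, if_neg hz]
        have hne : ¬ ((a - 1 : Fin (m+1)) : ℕ) = m := by rw [hv]; omega
        have e1 : (a : ℕ) - 1 + 1 = (a : ℕ) := by omega
        have e2 : m - ((a : ℕ) - 1) = m - (a : ℕ) + 1 := by omega
        have hne' : ¬ ((a : ℕ) - 1 = m) := by omega
        simp only [hv, if_neg hne', e1, e2]
        have hsh : ∀ (z : Fin d) (u : Fin m → Fin d),
            shiftS (a : ℕ) (Fin.snoc u z) =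
              Function.update (shiftC (a : ℕ) u) ⟨m - (a : ℕ), by omega⟩ z :=
          fun z u => shiftS_snoc (a : ℕ) ha1 ha2 u z
        simp only [hsh]
        have hprod : ∀ z : Fin d,
            (∏ i : Fin (m+1), if (i : ℕ) < (a : ℕ)
              then ρ ((Fin.snoc f z : Fin (m+1) → Fin d) i)
                ((Fin.snoc g z : Fin (m+1) → Fin d) i) else 1)
            = ∏ i : Fin m, if (i : ℕ) < (a : ℕ) then ρ (f i) (g i) else 1 :=
          fun z => prod_rho ρ (a : ℕ) ha2 _ _ f g (fun i h => snoc_eq f z i h)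
            (fun i h => snoc_eq g z i h)
        simp only [hprod, ← mul_assoc]
        rw [← Finset.mul_sum]
        rw [headM_succ τ (m - (a : ℕ)) (by omega) (shiftC (a : ℕ) f) (shiftC (a : ℕ) g)]
    · have hne : ¬ ((a - 1 : Fin (m+1)) = b - 1) := fun h => hab (sub_left_inj.mp h)
      simp only [omegaRelabeled, omegaState, catalyst, Matrix.of_apply, if_neg hne,
        if_neg hab, Finset.sum_const_zero]
  · -- part (b)
    intro x y
    have key : ∀ a : Fin (m+1),
        (∑ h : Fin m → Fin d, omegaRelabeled ρ τ (Fin.snoc h x, a) (Fin.snoc h y, a))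
          = ((m : ℂ) + 1)⁻¹ * singleMarg τ ⟨m - (a : ℕ), by omega⟩ x y := by
      intro a
      by_cases hz : a = 0
      · subst hz
        simp only [omegaRelabeled, omegaState, Matrix.of_apply, eq_self_iff_true, if_true]
        have hval : ((0 - 1 : Fin (m+1)) : ℕ) = m := by rw [Fin.coe_sub_one]; simp
        simp only [hval, eq_self_iff_true, if_true]
        rw [← Finset.mul_sum]
        refine congrArg _ ?_
        have hlast : (⟨m - ((0 : Fin (m+1)) : ℕ), by omega⟩ : Fin (m+1)) = Fin.last m :=
          Fin.ext (by show m - ((0 : Fin (m+1)) : ℕ) = m; rfl)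
        rw [hlast, singleMarg_last]
      · have ha1 : 1 ≤ (a : ℕ) := by
          rcases Nat.eq_zero_or_pos (a : ℕ) with h | h
          · exact absurd (Fin.ext h) hz
          · exact h
        have ha2 : (a : ℕ) ≤ m := by have := a.isLt; omega
        have hv : ((a - 1 : Fin (m+1)) : ℕ) = (a : ℕ) - 1 := by
          rw [Fin.coe_sub_one, if_neg hz]
        have hne : ¬ ((a - 1 : Fin (m+1)) : ℕ) = m := by rw [hv]; omega
        have e1 : (a : ℕ) - 1 + 1 = (a : ℕ) := by omega
        have e2 : m - ((a : ℕ) - 1) = m - (a : ℕ) + 1 := by omega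
        have hne' : ¬ ((a : ℕ) - 1 = m) := by omega
        simp only [omegaRelabeled, omegaState, Matrix.of_apply, eq_self_iff_true, if_true,
          hv, if_neg hne', e1, e2]
        have hsh : ∀ (z : Fin d) (u : Fin m → Fin d),
            shiftS (a : ℕ) (Fin.snoc u z) =
              Function.update (shiftC (a : ℕ) u) ⟨m - (a : ℕ), by omega⟩ z :=
          fun z u => shiftS_snoc (a : ℕ) ha1 ha2 u z
        simp only [hsh]
        have hprod : ∀ h : Fin m → Fin d,
            (∏ i : Fin (m+1), if (i : ℕ) < (a : ℕ)
              then ρ ((Fin.snoc h x : Fin (m+1) → Fin d) i)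
                ((Fin.snoc h y : Fin (m+1) → Fin d) i) else 1)
            = ∏ i : Fin m, if (i : ℕ) < (a : ℕ) then ρ (h i) (h i) else 1 :=
          fun h => prod_rho ρ (a : ℕ) ha2 _ _ h h (fun i hh => snoc_eq h x i hh)
            (fun i hh => snoc_eq h y i hh)
        simp only [hprod]
        rw [← Finset.mul_sum]
        rw [partB ρ hρt τ (a : ℕ) ha1 ha2 x y]
    rw [Finset.sum_congr rfl fun a _ => key a, ← Finset.mul_sum]
    refine congrArg _ ?_
    have hinv : Function.Involutive
        (fun a : Fin (m+1) => (⟨m - (a : ℕ), by omega⟩ : Fin (m+1))) := by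
      intro a
      refine Fin.ext ?_
      show m - (m - (a : ℕ)) = (a : ℕ)
      have := a.isLt
      omega
    exact Fintype.sum_bijective _ hinv.bijective _ _ fun a => rfl
end
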